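/- Let Q ⊂ ℝ^d be a convex polytope with 0 in its interior, and let v₁, …, v_d be vertices of Q such that the simplex S = conv{0, v₁, …, v_d} has maximal d-dimensional volume among all simplices conv({0} ∪ W) where W ranges over sets of d vertices of Q. Then v₁, …, v_d are linearly independent and Q ⊆ P, where P = {β₁v₁ + ⋯ + β_d v_d : β_i ∈ [−1,1] for all i}. -/

import Mathlib

/-! For any basis `b`, the volume of `conv {0, w₁, …, w_d}` is `|b.det w|` times the volume of
`conv {0, b₁, …, b_d}`. The vertices of `Q` span the space (`0` is interior), so some simplex on
vertices is nondegenerate; hence so is the maximal one, and `v` is a basis. Replacing `v i` by a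
vertex `y` multiplies the volume by `|yᵢ|`, the `i`-th coordinate of `y` in the basis `v`, so
maximality gives `|yᵢ| ≤ 1` for every vertex. The box `{x | ∀ i, |xᵢ| ≤ 1}` is convex and `Q` is
the convex hull of its vertices, so `Q ⊆ P`. -/

open Set MeasureTheory Module Function

variable {E : Type*} [NormedAddCommGroup E] [NormedSpace ℝ E]

theorem Set.Finite.convexHull_extremePoints_convexHull {V : Set E} (hV : V.Finite) :
    convexHull ℝ ((convexHull ℝ V).extremePoints ℝ) = convexHull ℝ V := by
  have hext : ((convexHull ℝ V).extremePoints ℝ).Finite := hV.subset extremePoints_convexHull_subset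
  simpa only [(hext.isClosed_convexHull ℝ).closure_eq] using
    closure_convexHull_extremePoints (hV.isCompact_convexHull ℝ) (convex_convexHull ℝ V)

theorem Submodule.span_eq_top_of_nonempty_interior_convexHull {s : Set E}
    (hs : (interior (convexHull ℝ s)).Nonempty) : Submodule.span ℝ s = ⊤ :=
  (Submodule.span ℝ s).eq_top_of_nonempty_interior' <|
    hs.mono <| interior_mono <| convexHull_min Submodule.subset_span (Submodule.span ℝ s).convex

theorem Module.Basis.exists_basis_range_subset {ι K V : Type*} [DivisionRing K] [AddCommGroup V]
    [Module K V] (b : Basis ι K V) {s : Set V} (hs : Submodule.span K s = ⊤) :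
    ∃ b' : Basis ι K V, range b' ⊆ s := by
  let b₀ := Basis.ofSpan hs.ge
  exact ⟨b₀.reindex (b₀.indexEquiv b), by rw [Basis.range_reindex]; exact Basis.ofSpan_subset _⟩

theorem Module.Basis.det_update_self {ι R M : Type*} [Fintype ι] [DecidableEq ι] [CommRing R]
    [AddCommGroup M] [Module R M] (b : Basis ι R M) (i : ι) (y : M) :
    b.det (update b i y) = b.repr y i := by
  rw [Basis.det_apply, Basis.toMatrix_update, Basis.toMatrix_self, ← Matrix.cramer_apply,
    Matrix.cramer_one]
  rfl

theorem Module.Basis.convexHull_subset_of_repr_mem_Icc {ι : Type*} [Fintype ι] (b : Basis ι ℝ E)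
    {s : Set E} (hs : ∀ y ∈ s, ∀ i, b.repr y i ∈ Icc (-1 : ℝ) 1) :
    convexHull ℝ s ⊆ {x | ∃ β : ι → ℝ, (∀ i, β i ∈ Icc (-1 : ℝ) 1) ∧ x = ∑ i, β i • b i} := by
  have hconv : Convex ℝ (⋂ i, b.coord i ⁻¹' Icc (-1 : ℝ) 1) :=
    convex_iInter fun i => (convex_Icc (-1 : ℝ) 1).linear_preimage (b.coord i)
  have hsub : s ⊆ ⋂ i, b.coord i ⁻¹' Icc (-1 : ℝ) 1 := fun y hy => mem_iInter.2 (hs y hy)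
  intro x hx
  exact ⟨fun i => b.repr x i, mem_iInter.1 (convexHull_min hsub hconv hx), (b.sum_repr x).symm⟩

section Volume

variable [MeasurableSpace E] (μ : Measure E) [μ.IsAddHaarMeasure] {ι : Type*}

theorem addHaar_convexHull_insert_zero_range [FiniteDimensional ℝ E] [BorelSpace E]
    [Fintype ι] [DecidableEq ι] (b : Basis ι ℝ E) (w : ι → E) :
    μ (convexHull ℝ (insert 0 (range w))) =
      ENNReal.ofReal |b.det w| * μ (convexHull ℝ (insert 0 (range b))) := by
  set f := b.constr ℝ w
  have hfb : f ∘ b = w := funext fun i => b.constr_basis ℝ w i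
  have hdet : LinearMap.det f = b.det w := by
    rw [← hfb, b.det_comp, b.det_self, mul_one]
  rw [← hdet, ← Measure.addHaar_image_linearMap, f.image_convexHull, image_insert_eq, map_zero,
    ← range_comp, hfb]

theorem Module.Basis.addHaar_convexHull_insert_zero_range_pos [FiniteDimensional ℝ E]
    (b : Basis ι ℝ E) :
    0 < μ (convexHull ℝ (insert 0 (range b))) := by
  have hspan : affineSpan ℝ (insert 0 (range b)) = ⊤ := by
    rw [← SetLike.coe_set_eq, affineSpan_insert_zero, b.span_eq]
    rfl
  obtain ⟨x, hx⟩ := interior_convexHull_nonempty_iff_affineSpan_eq_top.mpr hspan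
  exact (isOpen_interior.measure_pos μ ⟨x, hx⟩).trans_le (measure_mono interior_subset)

theorem addHaar_convexHull_insert_zero_range_lt_top [Finite ι] (w : ι → E) :
    μ (convexHull ℝ (insert 0 (range w))) < ⊤ :=
  (((finite_range w).insert 0).isCompact_convexHull ℝ).measure_lt_top

theorem isBasis_of_addHaar_convexHull_insert_zero_range_ne_zero [FiniteDimensional ℝ E]
    [BorelSpace E] [Fintype ι] [DecidableEq ι] (b : Basis ι ℝ E) {w : ι → E}
    (hw : μ (convexHull ℝ (insert 0 (range w))) ≠ 0) :
    LinearIndependent ℝ w ∧ Submodule.span ℝ (range w) = ⊤ := by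
  refine (b.is_basis_iff_det).mpr (isUnit_iff_ne_zero.mpr fun hdet => hw ?_)
  rw [addHaar_convexHull_insert_zero_range μ b, hdet, abs_zero, ENNReal.ofReal_zero, zero_mul]

theorem Module.Basis.abs_repr_le_one_of_addHaar_le [FiniteDimensional ℝ E] [BorelSpace E]
    [Fintype ι] [DecidableEq ι] (b : Basis ι ℝ E) {i : ι} {y : E}
    (h : μ (convexHull ℝ (insert 0 (range (update b i y)))) ≤
      μ (convexHull ℝ (insert 0 (range b)))) :
    |b.repr y i| ≤ 1 := by
  rw [addHaar_convexHull_insert_zero_range μ b, b.det_update_self] at h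
  rw [← ENNReal.ofReal_le_one]
  exact (ENNReal.mul_le_mul_iff_left (b.addHaar_convexHull_insert_zero_range_pos μ).ne'
    (addHaar_convexHull_insert_zero_range_lt_top μ b).ne).mp (by simpa using h)

end Volume

/-- Let `Q ⊆ ℝ^d` be a convex polytope with `0` in its interior, and
let `v₁,…,v_d` be vertices of `Q` such that `S = conv{0,v₁,…,v_d}` has maximal
volume among all simplices on `0` and `d` vertices of `Q`. Then `v₁,…,v_d` are
linearly independent and `Q ⊆ P = {β₁v₁ + ⋯ + β_d v_d : β_i ∈ [-1,1]}`. -/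
theorem maximal_simplex_parallelotope (d : ℕ)
    (Q : Set (EuclideanSpace ℝ (Fin d)))
    (hQpoly : ∃ V : Finset (EuclideanSpace ℝ (Fin d)), Q = convexHull ℝ (V : Set (EuclideanSpace ℝ (Fin d))))
    (h0 : (0 : EuclideanSpace ℝ (Fin d)) ∈ interior Q)
    (v : Fin d → EuclideanSpace ℝ (Fin d))
    (hvert : ∀ i, v i ∈ Set.extremePoints ℝ Q)
    (hmax : ∀ w : Fin d → EuclideanSpace ℝ (Fin d), (∀ i, w i ∈ Set.extremePoints ℝ Q) →
      volume (convexHull ℝ (insert (0 : EuclideanSpace ℝ (Fin d)) (Set.range w))) ≤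
        volume (convexHull ℝ (insert (0 : EuclideanSpace ℝ (Fin d)) (Set.range v)))) :
    LinearIndependent ℝ v ∧
      Q ⊆ {x : EuclideanSpace ℝ (Fin d) |
        ∃ β : Fin d → ℝ, (∀ i, β i ∈ Set.Icc (-1 : ℝ) 1) ∧ x = ∑ i, β i • v i} := by
  obtain ⟨V, hQV⟩ := hQpoly
  have hQ : convexHull ℝ (Q.extremePoints ℝ) = Q :=
    hQV ▸ V.finite_toSet.convexHull_extremePoints_convexHull
  have hspan : Submodule.span ℝ (Q.extremePoints ℝ) = ⊤ :=
    Submodule.span_eq_top_of_nonempty_interior_convexHull (by rw [hQ]; exact ⟨0, h0⟩)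
  obtain ⟨w, hw⟩ := (EuclideanSpace.basisFun (Fin d) ℝ).toBasis.exists_basis_range_subset hspan
  have hvol : volume (convexHull ℝ (insert 0 (range v))) ≠ 0 :=
    ((w.addHaar_convexHull_insert_zero_range_pos volume).trans_le
      (hmax w fun i => hw (mem_range_self i))).ne'
  obtain ⟨hli, hsp⟩ := isBasis_of_addHaar_convexHull_insert_zero_range_ne_zero volume w hvol
  let b := Basis.mk hli hsp.ge
  have hb : ⇑b = v := Basis.coe_mk hli hsp.ge
  have hrepr : ∀ y ∈ Q.extremePoints ℝ, ∀ i, b.repr y i ∈ Icc (-1 : ℝ) 1 :=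
    fun y hy i => abs_le.mp <| b.abs_repr_le_one_of_addHaar_le volume <| by
      rw [hb]
      exact hmax _ ((forall_update_iff v fun _ z => z ∈ _).2 ⟨hy, fun j _ => hvert j⟩)
  refine ⟨hli, ?_⟩
  rw [← hQ]
  simpa only [hb] using b.convexHull_subset_of_repr_mem_Icc hrepr
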